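/- For every k ≥ 1, the commutator [a, c^{-2^k}] = a⁻¹·c^{2^k}·a·c^{-2^k} fixes every word of length 4, its section at every vertex v ∈ {0,1}⁴ with v ≠ 0111 is the identity, and its section at the vertex 0111 equals [a, c^{-2^{k-1}}]. -/

import Mathlib

namespace BVTree

/-- States of the automaton (generators, their inverses, and the identity). -/
inductive Q : Type
  | e | qa | qb | qc | qd | qa' | qb' | qc' | qd'
  deriving DecidableEq

open Q

/-- Output function of the automaton. -/
def Qout : Q → Bool → Bool
  | qa, x => !x
  | qa', x => !x
  | _, x => x

/-- Transition function of the automaton. -/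
def Qtrans : Q → Bool → Q
  | qa, false => qd
  | qa, true => e
  | qb, false => qa
  | qb, true => qc
  | qc, _ => qa
  | qd, false => e
  | qd, true => qb
  | qa', false => e
  | qa', true => qd'
  | qb', false => qa'
  | qb', true => qc'
  | qc', _ => qa'
  | qd', false => e
  | qd', true => qb'
  | e, _ => e

/-- The state corresponding to the inverse automorphism. -/
def Qinv : Q → Q
  | e => e
  | qa => qa' | qb => qb' | qc => qc' | qd => qd'
  | qa' => qa | qb' => qb | qc' => qc | qd' => qd

/-- The action of a state on finite binary words. -/
def act : Q → List Bool → List Bool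
  | _, [] => []
  | q, x :: w => Qout q x :: act (Qtrans q x) w

lemma act_inv (q : Q) : ∀ w, act (Qinv q) (act q w) = w := by
  intro w
  induction w generalizing q with
  | nil => rfl
  | cons x w ih =>
    have h1 : Qout (Qinv q) (Qout q x) = x := by cases q <;> cases x <;> rfl
    have h2 : Qtrans (Qinv q) (Qout q x) = Qinv (Qtrans q x) := by
      cases q <;> cases x <;> rfl
    simp [act, h1, h2, ih]

/-- The tree automorphism determined by a state of the automaton. -/
def aut (q : Q) : Equiv.Perm (List Bool) where
  toFun := act q
  invFun := act (Qinv q)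
  left_inv := act_inv q
  right_inv := by
    intro w
    have h : Qinv (Qinv q) = q := by cases q <;> rfl
    simpa [h] using act_inv (Qinv q) w

/-- The automorphism `a`: `a(0w) = 1·d(w)`, `a(1w) = 0·w`. -/
def a : Equiv.Perm (List Bool) := aut qa
/-- The automorphism `b`: `b(0w) = 0·a(w)`, `b(1w) = 1·c(w)`. -/
def b : Equiv.Perm (List Bool) := aut qb
/-- The automorphism `c`: `c(0w) = 0·a(w)`, `c(1w) = 1·a(w)`. -/
def c : Equiv.Perm (List Bool) := aut qc
/-- The automorphism `d`: `d(0w) = 0·w`, `d(1w) = 1·b(w)`. -/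
def d : Equiv.Perm (List Bool) := aut qd

/-- The group `G` generated by `a`, `b`, `c`, `d`. -/
def G : Subgroup (Equiv.Perm (List Bool)) := Subgroup.closure {a, b, c, d}

/-!
Write `(g₀, g₁)` (`ofSections`) for the automorphism acting as `g₀` below `0` and as `g₁`
below `1`, and `σ` (`swapRoot`) for the swap of the first letter. Then `a = σ (d, 1)`,
`b = (a, c)`, `c = (a, a)`, `d = (1, b)`, so `a² = (d, d)`. Commutators of such pairs are
computed coordinatewise, and `σ` commutes with `c^{2n} = (a^{2n}, a^{2n})`. Writing
`[x, y⁻¹] = x⁻¹ y x y⁻¹` (Mathlib's `⁅x⁻¹, y⁆`), this gives for every `n`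
`[a, c^{-2n}] = ([d, a^{-2n}], 1)`, `[d, a^{-2n}] = (1, [b, d^{-n}])`,
`[b, d^{-n}] = (1, [c, b^{-n}])` and `[c, b^{-n}] = ([a, a^{-n}], [a, c^{-n}]) = (1, [a, c^{-n}])`.
Taking `n = 2^{k-1}` and reading off the path `0111` gives the theorem.
-/

open Equiv
open scoped commutatorElement

lemma act_e (w : List Bool) : act e w = w := by
  induction w with
  | nil => rfl
  | cons x w ih => exact congrArg (x :: ·) ih

def ofSections : Perm (List Bool) × Perm (List Bool) →* Perm (List Bool) where
  toFun p :=
    { toFun := fun | [] => [] | x :: w => x :: (cond x p.2 p.1) w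
      invFun := fun | [] => [] | x :: w => x :: (cond x p.2⁻¹ p.1⁻¹) w
      left_inv := by rintro (_ | ⟨_ | _, w⟩) <;> simp
      right_inv := by rintro (_ | ⟨_ | _, w⟩) <;> simp }
  map_one' := by ext1 (_ | ⟨_ | _, w⟩) <;> rfl
  map_mul' p q := by ext1 (_ | ⟨_ | _, w⟩) <;> rfl

section ofSections

variable (p : Perm (List Bool) × Perm (List Bool)) (w : List Bool)

@[simp] lemma ofSections_apply_false : ofSections p (false :: w) = false :: p.1 w := rfl

@[simp] lemma ofSections_apply_true : ofSections p (true :: w) = true :: p.2 w := rfl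

end ofSections

lemma commutatorElement_ofSections (p q : Perm (List Bool) × Perm (List Bool)) :
    ⁅ofSections p, ofSections q⁆ = ofSections (⁅p.1, q.1⁆, ⁅p.2, q.2⁆) :=
  (map_commutatorElement ofSections p q).symm

def swapRoot : Perm (List Bool) :=
  Function.Involutive.toPerm (fun | [] => [] | x :: w => (!x) :: w)
    (by rintro (_ | ⟨x, w⟩) <;> simp)

@[simp] lemma swapRoot_inv : swapRoot⁻¹ = swapRoot := rfl

lemma swapRoot_mul_self : swapRoot * swapRoot = 1 := inv_mul_cancel swapRoot

lemma swapRoot_mul_ofSections (p : Perm (List Bool) × Perm (List Bool)) :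
    swapRoot * ofSections p = ofSections p.swap * swapRoot := by
  ext1 (_ | ⟨_ | _, w⟩) <;> rfl

lemma commute_swapRoot_ofSections_diag (f : Perm (List Bool)) :
    Commute swapRoot (ofSections (f, f)) :=
  swapRoot_mul_ofSections (f, f)

lemma a_eq_swapRoot_mul_ofSections : a = swapRoot * ofSections (d, 1) := by
  ext1 (_ | ⟨_ | _, w⟩)
  · rfl
  · rfl
  · exact congrArg (false :: ·) (act_e w)

lemma b_eq_ofSections : b = ofSections (a, c) := by
  ext1 (_ | ⟨_ | _, w⟩) <;> rfl

lemma c_eq_ofSections : c = ofSections (a, a) := by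
  ext1 (_ | ⟨_ | _, w⟩) <;> rfl

lemma d_eq_ofSections : d = ofSections (1, b) := by
  ext1 (_ | ⟨_ | _, w⟩)
  · rfl
  · exact congrArg (false :: ·) (act_e w)
  · rfl

lemma a_sq : a ^ 2 = ofSections (d, d) := by
  rw [pow_two, a_eq_swapRoot_mul_ofSections, ← mul_assoc, swapRoot_mul_ofSections,
    mul_assoc (ofSections _), swapRoot_mul_self, mul_one, ← map_mul]
  simp

lemma a_pow_two_mul (n : ℕ) : a ^ (2 * n) = ofSections (d ^ n, d ^ n) := by
  rw [pow_mul, a_sq, ← map_pow, Prod.pow_mk]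

lemma commutatorElement_inv_a_c_pow_two_mul (n : ℕ) :
    ⁅a⁻¹, c ^ (2 * n)⁆ = ofSections (⁅d⁻¹, a ^ (2 * n)⁆, 1) := by
  have hc : c ^ (2 * n) = ofSections (a ^ (2 * n), a ^ (2 * n)) := by
    rw [c_eq_ofSections, ← map_pow, Prod.pow_mk]
  have ha : a⁻¹ = ofSections (d⁻¹, 1) * swapRoot := by
    rw [a_eq_swapRoot_mul_ofSections, mul_inv_rev, swapRoot_inv, ← map_inv, Prod.inv_mk,
      inv_one]
  rw [ha, commutatorElement_mul_left_eq_conj_mul, hc,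
    (commute_swapRoot_ofSections_diag _).commutator_eq, commutatorElement_ofSections]
  simp

lemma commutatorElement_inv_d_a_pow_two_mul (n : ℕ) :
    ⁅d⁻¹, a ^ (2 * n)⁆ = ofSections (1, ⁅b⁻¹, d ^ n⁆) := by
  rw [a_pow_two_mul, d_eq_ofSections, ← map_inv, commutatorElement_ofSections]
  simp

lemma commutatorElement_inv_b_d_pow (n : ℕ) :
    ⁅b⁻¹, d ^ n⁆ = ofSections (1, ⁅c⁻¹, b ^ n⁆) := by
  rw [d_eq_ofSections, ← map_pow, b_eq_ofSections, ← map_inv, commutatorElement_ofSections]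
  simp

lemma commutatorElement_inv_c_b_pow (n : ℕ) :
    ⁅c⁻¹, b ^ n⁆ = ofSections (1, ⁅a⁻¹, c ^ n⁆) := by
  rw [b_eq_ofSections, ← map_pow, c_eq_ofSections, ← map_inv, commutatorElement_ofSections]
  simp [((Commute.refl a).inv_left.pow_right n).commutator_eq]

def atVertex : List Bool → Perm (List Bool) → Perm (List Bool)
  | [], h => h
  | false :: v, h => ofSections (atVertex v h, 1)
  | true :: v, h => ofSections (1, atVertex v h)

lemma atVertex_apply_append_self (v : List Bool) (h : Perm (List Bool)) (w : List Bool) :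
    atVertex v h (v ++ w) = v ++ h w := by
  induction v with
  | nil => rfl
  | cons x v ih => cases x <;> simp [atVertex, ih]

lemma atVertex_apply_append_of_ne {u v : List Bool} (hlen : u.length = v.length) (hne : u ≠ v)
    (h : Perm (List Bool)) (w : List Bool) : atVertex v h (u ++ w) = u ++ w := by
  induction v generalizing u with
  | nil => exact absurd (List.eq_nil_of_length_eq_zero hlen) hne
  | cons y v ih =>
    obtain _ | ⟨x, u⟩ := u
    · simp at hlen
    · simp only [List.length_cons, Nat.add_right_cancel_iff, ne_eq, List.cons.injEq] at hlen hne
      cases x <;> cases y <;> simp_all [atVertex]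

lemma atVertex_apply_of_length_eq {u v : List Bool} {h : Perm (List Bool)} (hh : h [] = [])
    (hlen : u.length = v.length) : atVertex v h u = u := by
  by_cases huv : u = v
  · simpa [huv, hh] using atVertex_apply_append_self v h []
  · simpa using atVertex_apply_append_of_ne hlen huv h []

lemma aut_mem_stabilizer_nil (q : Q) :
    aut q ∈ MulAction.stabilizer (Perm (List Bool)) ([] : List Bool) := rfl

/-- for `k ≥ 1`, the commutator `[a, c^{-2^k}]` fixes level `4`, has trivial
sections at all level-4 vertices other than `0111`, and its section at `0111` is
`[a, c^{-2^{k-1}}]`. -/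
theorem commutator_section_recursion (k : ℕ) (hk : 1 ≤ k) :
    (∀ v : List Bool, v.length = 4 →
      (a⁻¹ * c ^ (2 ^ k) * a * (c ^ (2 ^ k))⁻¹) v = v) ∧
    (∀ v : List Bool, v.length = 4 → v ≠ [false, true, true, true] →
      ∀ w : List Bool, (a⁻¹ * c ^ (2 ^ k) * a * (c ^ (2 ^ k))⁻¹) (v ++ w) = v ++ w) ∧
    (∀ w : List Bool,
      (a⁻¹ * c ^ (2 ^ k) * a * (c ^ (2 ^ k))⁻¹) ([false, true, true, true] ++ w)
        = [false, true, true, true] ++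
            (a⁻¹ * c ^ (2 ^ (k - 1)) * a * (c ^ (2 ^ (k - 1)))⁻¹) w) := by
  obtain ⟨j, rfl⟩ := Nat.exists_eq_add_of_le' hk
  have hcomm (m : ℕ) : a⁻¹ * c ^ m * a * (c ^ m)⁻¹ = ⁅a⁻¹, c ^ m⁆ := by
    rw [commutatorElement_def, inv_inv]
  have hrec :
      ⁅a⁻¹, c ^ 2 ^ (j + 1)⁆ = atVertex [false, true, true, true] ⁅a⁻¹, c ^ 2 ^ j⁆ := by
    rw [pow_succ', commutatorElement_inv_a_c_pow_two_mul, commutatorElement_inv_d_a_pow_two_mul,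
      commutatorElement_inv_b_d_pow, commutatorElement_inv_c_b_pow]
    rfl
  have hnil : ⁅a⁻¹, c ^ 2 ^ j⁆ [] = [] := by
    have ha := aut_mem_stabilizer_nil qa
    have hc := aut_mem_stabilizer_nil qc
    rw [commutatorElement_def]
    exact mul_mem (mul_mem (mul_mem (inv_mem ha) (pow_mem hc _)) (inv_mem (inv_mem ha)))
      (inv_mem (pow_mem hc _))
  simp only [hcomm, hrec, Nat.add_sub_cancel]
  exact ⟨fun v hv => atVertex_apply_of_length_eq hnil hv,
    fun v hv hne w => atVertex_apply_append_of_ne hv hne _ w,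
    fun w => atVertex_apply_append_self _ _ w⟩

end BVTree
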